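/- (Proposition 1 for GRPO.) Let μ be the independent Bernoulli selection model with parameters p : Fin N → [0,1], G ⊆ Fin N, f a monotone set function on subsets of G with f(∅) = 0 and marginal gains 0 ≤ Δ_j(T) ≤ δ̄_j, μ₀ ∈ ℝ, j ∈ G, and K ≥ 2. Set r_ans(Z) = μ₀ + f(Z ∩ G). For i.i.d. selections Z_1, …, Z_K each distributed according to μ, the GRPO gradient term E[ (r_ans(Z_1) − (1/K)·∑_{i=1}^K r_ans(Z_i)) · (z_j(Z_1) − p_j) ] lies in the interval [0, ((K − 1)/K)·p_j(1 − p_j)·δ̄_j·μ(ℰ_j)]. -/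
import Mathlib


open Finset

namespace LongRLVR

/-- Real-valued indicator that chunk `j` belongs to the selection `Z`. -/
noncomputable def ind {N : ℕ} (Z : Fin N → Bool) (j : Fin N) : ℝ := if Z j then 1 else 0

/-- Expectation of `X` under the finitely supported distribution `μ` on selections. -/
noncomputable def expec {N : ℕ} (μ X : (Fin N → Bool) → ℝ) : ℝ := ∑ Z, μ Z * X Z

/-- Covariance of `X` and `Y` under `μ`. -/
noncomputable def cov {N : ℕ} (μ X Y : (Fin N → Bool) → ℝ) : ℝ :=
  expec μ (fun Z => X Z * Y Z) - expec μ X * expec μ Y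

/-- Unnormalized log-linear weight `exp(∑ k, s k * z k + ψ Z)`. -/
noncomputable def wt {N : ℕ} (s : Fin N → ℝ) (ψ : (Fin N → Bool) → ℝ)
    (Z : Fin N → Bool) : ℝ :=
  Real.exp ((∑ k, s k * ind Z k) + ψ Z)

/-- The log-linear policy `π_s` with potential `ψ`. -/
noncomputable def pol {N : ℕ} (s : Fin N → ℝ) (ψ : (Fin N → Bool) → ℝ)
    (Z : Fin N → Bool) : ℝ :=
  wt s ψ Z / ∑ Z', wt s ψ Z'

/-- Marginal selection probability `p_j(s) = E_{π_s}[z_j]`. -/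
noncomputable def pmarg {N : ℕ} (s : Fin N → ℝ) (ψ : (Fin N → Bool) → ℝ) (j : Fin N) : ℝ :=
  expec (pol s ψ) (fun Z => ind Z j)

open Classical in
/-- Probability of the event `A` under `μ`. -/
noncomputable def probEvent {N : ℕ} (μ : (Fin N → Bool) → ℝ)
    (A : (Fin N → Bool) → Prop) : ℝ :=
  ∑ Z, if A Z then μ Z else 0

open Classical in
/-- Conditional expectation `E_μ[X | A] = E_μ[X · 1_A] / μ(A)`. -/
noncomputable def condExp {N : ℕ} (μ X : (Fin N → Bool) → ℝ)
    (A : (Fin N → Bool) → Prop) : ℝ :=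
  (∑ Z, if A Z then μ Z * X Z else 0) / probEvent μ A

/-- The independent Bernoulli selection model with parameters `p`. -/
noncomputable def bern {N : ℕ} (p : Fin N → ℝ) (Z : Fin N → Bool) : ℝ :=
  ∏ k, if Z k then p k else 1 - p k

/-- Logistic sigmoid. -/
noncomputable def sigmoid (x : ℝ) : ℝ := 1 / (1 + Real.exp (-x))

/-- The subset of `Fin N` corresponding to the selection `Z`. -/
def toFin {N : ℕ} (Z : Fin N → Bool) : Finset (Fin N) :=
  Finset.univ.filter (fun k => Z k = true)



lemma sum_prod_fn {ι α : Type*} [Fintype ι] [DecidableEq ι] [Fintype α] [DecidableEq α]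
    (F : ι → α → ℝ) : ∑ Zs : ι → α, ∏ i, F i (Zs i) = ∏ i, ∑ a, F i a := by
  rw [Finset.prod_univ_sum, Fintype.piFinset_univ]

lemma sum_bern {N : ℕ} (p : Fin N → ℝ) : ∑ Z, bern p Z = 1 := by
  classical
  have h := sum_prod_fn (fun (k : Fin N) (b : Bool) => if b then p k else 1 - p k)
  simp only [bern]
  rw [h]
  apply Finset.prod_eq_one
  intro k _
  simp

lemma bern_nonneg {N : ℕ} (p : Fin N → ℝ) (hp : ∀ k, 0 ≤ p k ∧ p k ≤ 1) (Z : Fin N → Bool) :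
    0 ≤ bern p Z := by
  apply Finset.prod_nonneg
  intro k _
  split
  · exact (hp k).1
  · linarith [(hp k).2]

lemma indep {N : ℕ} (p : Fin N → ℝ) (j : Fin N) (φ : (Fin N → Bool) → ℝ)
    (hφ : ∀ Z b, φ (Function.update Z j b) = φ Z) :
    ∑ Z, bern p Z * (ind Z j * φ Z) = p j * ∑ Z, bern p Z * φ Z := by
  classical
  set ν : (Fin N → Bool) → ℝ := fun Z => ∏ k ∈ Finset.univ.erase j, (if Z k then p k else 1 - p k) with hν
  have hbern : ∀ Z, bern p Z = (if Z j then p j else 1 - p j) * ν Z := by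
    intro Z
    rw [bern, ← Finset.mul_prod_erase Finset.univ _ (Finset.mem_univ j)]
  have hνinv : ∀ Z b, ν (Function.update Z j b) = ν Z := by
    intro Z b
    apply Finset.prod_congr rfl
    intro k hk
    rw [Function.update_of_ne (Finset.mem_erase.mp hk).1]
  have hinv : Function.Involutive (fun Z : Fin N → Bool => Function.update Z j (!Z j)) := by
    intro Z
    simp [Function.update_idem]
  have hAB : ∑ Z, ind Z j * (ν Z * φ Z) = ∑ Z, (1 - ind Z j) * (ν Z * φ Z) := by
    refine Fintype.sum_equiv hinv.toPerm _ _ ?_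
    intro Z
    simp only [Function.Involutive.coe_toPerm]
    rw [hνinv, hφ]
    cases hb : Z j <;> simp [ind, hb]
  have hL : ∑ Z, bern p Z * (ind Z j * φ Z) = p j * ∑ Z, ind Z j * (ν Z * φ Z) := by
    rw [Finset.mul_sum]
    apply Finset.sum_congr rfl
    intro Z _
    rw [hbern]
    cases hb : Z j <;> simp [ind, hb] <;> ring
  have hR : ∑ Z, bern p Z * φ Z = ∑ Z, ind Z j * (ν Z * φ Z) := by
    have expand : ∑ Z, bern p Z * φ Z
        = ∑ Z, (p j * (ind Z j * (ν Z * φ Z)) + (1 - p j) * ((1 - ind Z j) * (ν Z * φ Z))) := by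
      apply Finset.sum_congr rfl
      intro Z _
      rw [hbern]
      cases hb : Z j <;> simp [ind, hb] <;> ring
    rw [expand, Finset.sum_add_distrib, ← Finset.mul_sum, ← Finset.mul_sum, ← hAB]
    ring
  rw [hL, hR]

lemma T_update {N : ℕ} (G : Finset (Fin N)) (j : Fin N) (Z : Fin N → Bool) (b : Bool) :
    (toFin (Function.update Z j b) ∩ G).erase j = (toFin Z ∩ G).erase j := by
  ext k
  simp only [Finset.mem_erase, Finset.mem_inter, toFin, Finset.mem_filter, Finset.mem_univ,
    true_and]
  constructor
  · rintro ⟨hkj, hZ, hG⟩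
    exact ⟨hkj, by rwa [Function.update_of_ne hkj] at hZ, hG⟩
  · rintro ⟨hkj, hZ, hG⟩
    exact ⟨hkj, by rwa [Function.update_of_ne hkj], hG⟩

lemma fdecomp {N : ℕ} (G : Finset (Fin N)) (f : Finset (Fin N) → ℝ) (j : Fin N) (hj : j ∈ G)
    (Z : Fin N → Bool) :
    f (toFin Z ∩ G) = f ((toFin Z ∩ G).erase j)
      + ind Z j * (f (insert j ((toFin Z ∩ G).erase j)) - f ((toFin Z ∩ G).erase j)) := by
  by_cases hb : Z j
  · have hjm : j ∈ toFin Z ∩ G := by simp [toFin, hb, hj]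
    rw [Finset.insert_erase hjm]
    simp [ind, hb]
  · have hjm : j ∉ toFin Z ∩ G := by simp [toFin, hb]
    rw [Finset.erase_eq_of_notMem hjm]
    simp [ind, hb]

lemma grpo_reduce {N K : ℕ} (hK : 0 < K) (μ g h : (Fin N → Bool) → ℝ)
    (hμ1 : ∑ Z, μ Z = 1) (hh0 : ∑ Z, μ Z * h Z = 0) :
    ∑ Zs : Fin K → (Fin N → Bool), (∏ i, μ (Zs i)) *
        ((g (Zs ⟨0, hK⟩) - (1 / (K : ℝ)) * ∑ i, g (Zs i)) * h (Zs ⟨0, hK⟩))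
      = (((K : ℝ) - 1) / (K : ℝ)) * ∑ Z, μ Z * (g Z * h Z) := by
  classical
  set z : Fin K := ⟨0, hK⟩ with hz
  set F : Fin K → Fin K → (Fin N → Bool) → ℝ := fun l i Z =>
    μ Z * ((if i = z then h Z else 1) * (if i = l then g Z else 1)) with hF
  have hFprod : ∀ (l : Fin K) (Zs : Fin K → (Fin N → Bool)),
      ∏ i, F l i (Zs i) = (∏ i, μ (Zs i)) * (g (Zs l) * h (Zs z)) := by
    intro l Zs
    simp only [hF]
    rw [Finset.prod_mul_distrib, Finset.prod_mul_distrib,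
        Finset.prod_ite_eq' Finset.univ z (fun i => h (Zs i)),
        Finset.prod_ite_eq' Finset.univ l (fun i => g (Zs i))]
    simp only [Finset.mem_univ, if_pos]
    ring
  have hFsum : ∀ l : Fin K,
      ∑ Zs : Fin K → (Fin N → Bool), ∏ i, F l i (Zs i)
        = if l = z then ∑ Z, μ Z * (g Z * h Z) else 0 := by
    intro l
    rw [sum_prod_fn]
    by_cases hl : l = z
    · rw [if_pos hl]
      have h1 : ∀ b ∈ Finset.univ, b ≠ z → ∑ a : Fin N → Bool, F l b a = 1 := by
        intro i _ hi
        have hil : i ≠ l := fun e => hi (e.trans hl)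
        have : ∑ a : Fin N → Bool, F l i a = ∑ a : Fin N → Bool, μ a := by
          apply Finset.sum_congr rfl
          intro Z _
          simp [hF, hi, hil]
        rw [this, hμ1]
      rw [Finset.prod_eq_single_of_mem z (Finset.mem_univ z) h1]
      apply Finset.sum_congr rfl
      intro Z _
      have hlz : z = l := hl.symm
      simp only [hF, ← hlz, eq_self_iff_true, if_true]
      ring
    · rw [if_neg hl]
      apply Finset.prod_eq_zero (Finset.mem_univ z)
      have hzl : ¬ (z = l) := fun e => hl e.symm
      have : ∑ a : Fin N → Bool, F l z a = ∑ a : Fin N → Bool, μ a * h a := by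
        apply Finset.sum_congr rfl
        intro Z _
        simp [hF, hzl]
      rw [this, hh0]
  have expand : ∀ Zs : Fin K → (Fin N → Bool),
      (∏ i, μ (Zs i)) * ((g (Zs z) - (1 / (K : ℝ)) * ∑ i, g (Zs i)) * h (Zs z))
        = (∏ i, F z i (Zs i)) - (1 / (K : ℝ)) * ∑ l, ∏ i, F l i (Zs i) := by
    intro Zs
    rw [hFprod z Zs]
    have : ∑ l, ∏ i, F l i (Zs i) = ∑ l, (∏ i, μ (Zs i)) * (g (Zs l) * h (Zs z)) := by
      apply Finset.sum_congr rfl; intro l _; exact hFprod l Zs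
    rw [this, ← Finset.mul_sum, ← Finset.sum_mul]
    ring
  calc ∑ Zs : Fin K → (Fin N → Bool), (∏ i, μ (Zs i)) *
        ((g (Zs z) - (1 / (K : ℝ)) * ∑ i, g (Zs i)) * h (Zs z))
      = ∑ Zs : Fin K → (Fin N → Bool),
          ((∏ i, F z i (Zs i)) - (1 / (K : ℝ)) * ∑ l, ∏ i, F l i (Zs i)) := by
        apply Finset.sum_congr rfl; intro Zs _; exact expand Zs
    _ = (∑ Zs : Fin K → (Fin N → Bool), ∏ i, F z i (Zs i))
          - (1 / (K : ℝ)) * ∑ l, ∑ Zs : Fin K → (Fin N → Bool), ∏ i, F l i (Zs i) := by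
        rw [Finset.sum_sub_distrib, ← Finset.mul_sum, Finset.sum_comm]
    _ = (∑ Z, μ Z * (g Z * h Z)) - (1 / (K : ℝ)) * ∑ Z, μ Z * (g Z * h Z) := by
        rw [hFsum z, if_pos rfl]
        congr 2
        rw [Finset.sum_congr rfl (fun l _ => hFsum l)]
        simp
    _ = (((K : ℝ) - 1) / (K : ℝ)) * ∑ Z, μ Z * (g Z * h Z) := by
        have hK0 : (K : ℝ) ≠ 0 := Nat.cast_ne_zero.mpr (by omega)
        field_simp

/-- Proposition 1 for GRPO: the GRPO gradient term for the answer reward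
`r_ans(Z) = μ₀ + f(Z ∩ G)` lies in `[0, ((K−1)/K)·p_j(1−p_j)·δ̄_j·μ(ℰ_j)]`. -/
theorem stmt11 (N : ℕ) (p : Fin N → ℝ) (hp : ∀ k, 0 ≤ p k ∧ p k ≤ 1)
    (G : Finset (Fin N)) (f : Finset (Fin N) → ℝ) (hf0 : f ∅ = 0)
    (hmono : ∀ S T : Finset (Fin N), S ⊆ T → T ⊆ G → f S ≤ f T)
    (μ₀ : ℝ) (j : Fin N) (hj : j ∈ G) (δb : ℝ) (hδb : 0 < δb)
    (hΔ : ∀ T : Finset (Fin N), T ⊆ G.erase j →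
      0 ≤ f (insert j T) - f T ∧ f (insert j T) - f T ≤ δb)
    (K : ℕ) (hK : 2 ≤ K) :
    0 ≤ (∑ Zs : Fin K → (Fin N → Bool), (∏ i, bern p (Zs i)) *
          (((μ₀ + f (toFin (Zs ⟨0, by omega⟩) ∩ G))
              - (1 / (K : ℝ)) * ∑ i, (μ₀ + f (toFin (Zs i) ∩ G)))
            * (ind (Zs ⟨0, by omega⟩) j - p j))) ∧
    (∑ Zs : Fin K → (Fin N → Bool), (∏ i, bern p (Zs i)) *
          (((μ₀ + f (toFin (Zs ⟨0, by omega⟩) ∩ G))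
              - (1 / (K : ℝ)) * ∑ i, (μ₀ + f (toFin (Zs i) ∩ G)))
            * (ind (Zs ⟨0, by omega⟩) j - p j)))
      ≤ (((K : ℝ) - 1) / (K : ℝ)) * (p j * (1 - p j)) * δb *
          probEvent (bern p)
            (fun Z => 0 < f (insert j ((toFin Z ∩ G).erase j)) - f ((toFin Z ∩ G).erase j)) := by
  classical
  have hμ1 := sum_bern p
  have hmarg : ∑ Z, bern p Z * ind Z j = p j := by
    have h1 := indep p j (fun _ => 1) (fun Z b => rfl)
    simpa [hμ1] using h1
  have hh0 : ∑ Z, bern p Z * (ind Z j - p j) = 0 := by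
    have e : ∑ Z, bern p Z * (ind Z j - p j)
        = (∑ Z, bern p Z * ind Z j) - p j * ∑ Z, bern p Z := by
      rw [Finset.mul_sum, ← Finset.sum_sub_distrib]
      apply Finset.sum_congr rfl
      intro Z _
      ring
    rw [e, hmarg, hμ1]
    ring
  have key2 : (∑ Zs : Fin K → (Fin N → Bool), (∏ i, bern p (Zs i)) *
          (((μ₀ + f (toFin (Zs ⟨0, by omega⟩) ∩ G))
              - (1 / (K : ℝ)) * ∑ i, (μ₀ + f (toFin (Zs i) ∩ G)))
            * (ind (Zs ⟨0, by omega⟩) j - p j)))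
      = (((K : ℝ) - 1) / (K : ℝ)) *
          ∑ Z, bern p Z * ((μ₀ + f (toFin Z ∩ G)) * (ind Z j - p j)) :=
    grpo_reduce (by omega) (bern p) (fun Z => μ₀ + f (toFin Z ∩ G))
      (fun Z => ind Z j - p j) hμ1 hh0
  set c : (Fin N → Bool) → ℝ := fun Z => μ₀ + f ((toFin Z ∩ G).erase j) with hc
  set Δf : (Fin N → Bool) → ℝ :=
    fun Z => f (insert j ((toFin Z ∩ G).erase j)) - f ((toFin Z ∩ G).erase j) with hΔf
  have hsub : ∀ Z : Fin N → Bool, (toFin Z ∩ G).erase j ⊆ G.erase j := fun Z =>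
    Finset.erase_subset_erase j Finset.inter_subset_right
  have hcinv : ∀ (Z : Fin N → Bool) (b : Bool), c (Function.update Z j b) = c Z := by
    intro Z b
    simp only [hc, T_update]
  have hΔinv : ∀ (Z : Fin N → Bool) (b : Bool), Δf (Function.update Z j b) = Δf Z := by
    intro Z b
    simp only [hΔf, T_update]
  have hic := indep p j c hcinv
  have hiΔ := indep p j Δf hΔinv
  have e1 : ∑ Z, bern p Z * ((μ₀ + f (toFin Z ∩ G)) * (ind Z j - p j))
      = (∑ Z, bern p Z * (ind Z j * c Z)) - p j * (∑ Z, bern p Z * c Z)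
        + (1 - p j) * ∑ Z, bern p Z * (ind Z j * Δf Z) := by
    rw [Finset.mul_sum, Finset.mul_sum, ← Finset.sum_sub_distrib, ← Finset.sum_add_distrib]
    apply Finset.sum_congr rfl
    intro Z _
    rw [fdecomp G f j hj Z]
    simp only [hc, hΔf]
    cases hb : Z j
    · simp only [ind, hb, Bool.false_eq_true, if_false]
      ring
    · simp only [ind, hb, if_true]
      ring
  have hS1 : ∑ Z, bern p Z * ((μ₀ + f (toFin Z ∩ G)) * (ind Z j - p j))
      = (p j * (1 - p j)) * ∑ Z, bern p Z * Δf Z := by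
    rw [e1, hic, hiΔ]
    ring
  have hp0 : 0 ≤ p j := (hp j).1
  have hp1 : 0 ≤ 1 - p j := by linarith [(hp j).2]
  have hKc : 0 ≤ ((K : ℝ) - 1) / (K : ℝ) := by
    have h1 : (1 : ℝ) ≤ (K : ℝ) := by exact_mod_cast Nat.one_le_of_lt hK
    apply div_nonneg <;> linarith
  have hD0 : 0 ≤ ∑ Z, bern p Z * Δf Z := by
    apply Finset.sum_nonneg
    intro Z _
    exact mul_nonneg (bern_nonneg p hp Z) (hΔ _ (hsub Z)).1
  have hD1 : ∑ Z, bern p Z * Δf Z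
      ≤ δb * probEvent (bern p)
          (fun Z => 0 < f (insert j ((toFin Z ∩ G).erase j)) - f ((toFin Z ∩ G).erase j)) := by
    rw [probEvent, Finset.mul_sum]
    apply Finset.sum_le_sum
    intro Z _
    have h1 := (hΔ _ (hsub Z)).1
    have h2 := (hΔ _ (hsub Z)).2
    have hb := bern_nonneg p hp Z
    split_ifs with hpos
    · simp only [hΔf]
      nlinarith
    · simp only [hΔf] at hpos ⊢
      push_neg at hpos
      nlinarith
  constructor
  · rw [key2, hS1]
    exact mul_nonneg hKc (mul_nonneg (mul_nonneg hp0 hp1) hD0)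
  · rw [key2, hS1]
    calc (((K : ℝ) - 1) / (K : ℝ)) * ((p j * (1 - p j)) * ∑ Z, bern p Z * Δf Z)
        ≤ (((K : ℝ) - 1) / (K : ℝ)) * ((p j * (1 - p j)) *
            (δb * probEvent (bern p)
              (fun Z => 0 < f (insert j ((toFin Z ∩ G).erase j))
                - f ((toFin Z ∩ G).erase j)))) := by
          exact mul_le_mul_of_nonneg_left
            (mul_le_mul_of_nonneg_left hD1 (mul_nonneg hp0 hp1)) hKc
      _ = (((K : ℝ) - 1) / (K : ℝ)) * (p j * (1 - p j)) * δb *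
            probEvent (bern p)
              (fun Z => 0 < f (insert j ((toFin Z ∩ G).erase j))
                - f ((toFin Z ∩ G).erase j)) := by ring

end LongRLVR
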